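/- Let p be an odd prime and z ∈ ℤ_p. For n ∈ ℕ let L_n(z) = ∑_{k=0}^{n} (−n)_k(n+1)_k/(k!)² · z^k, so that L_n(z) = P_n(1−2z) where P_n is the n-th Legendre polynomial. Then ∑_{k=0}^{p−1} (1/4)_k²/(k!)² · (4z(1−z))^k ≡ L_{(p−1)/2}(z) (mod p²) if p ≡ 1 (mod 4), and ∑_{k=0}^{p−1} (1/4)_k²/(k!)² · (4z(1−z))^k ≡ L_{(3p−1)/2}(z) (mod p²) if p ≡ 3 (mod 4). -/

import Mathlib

/-!
Put `n = 2r`, so that `4r + 1` is `p` or `3p` according as `p ≡ 1` or `3 (mod 4)`.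
The even Legendre polynomials obey the terminating quadratic transformation
`L_{2r}(z) = ∑_{k ≤ r} (-r)_k (r + 1/2)_k / (k!)² · (4z(1 - z))^k`: the right side is a
polynomial solution of the Legendre equation `(z(1 - z) Y')' = -2r(2r + 1) Y` with constant
term `1`, and this equation determines the coefficients recursively.
With `w = r + 1/4`, which is divisible by `p`, the parameters are `-r = 1/4 - w` and
`r + 1/2 = 1/4 + w`, so factor by factor `(-r)_k (r + 1/2)_k = ∏_{j<k} ((1/4 + j)² - w²)` is
`(1/4)_k²` modulo `p²`. As `k!` is a `p`-adic unit for `k < p`, and the terms with `k > r` of the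
transformed sum vanish, the two sums agree term by term modulo `p²`.
-/

open scoped BigOperators

/-- The Pochhammer symbol `(x)_k = x(x+1)⋯(x+k-1)` in `ℚ_[p]`. -/
noncomputable def poch (p : ℕ) [Fact p.Prime] (x : ℚ_[p]) (k : ℕ) : ℚ_[p] :=
  (ascPochhammer ℚ_[p] k).eval x

/-- The least non-negative residue `⟨α⟩_p ∈ {0,…,p-1}` of `α ∈ ℤ_[p]` modulo `p`. -/
noncomputable def res (p : ℕ) [Fact p.Prime] (α : ℤ_[p]) : ℕ :=
  (PadicInt.toZMod α).val

/-- `L_n(z) = ∑_{k=0}^n (−n)_k (n+1)_k / (k!)² · z^k = P_n(1−2z)` where `P_n` is the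
`n`-th Legendre polynomial. -/
noncomputable def legendreL (p : ℕ) [Fact p.Prime] (n : ℕ) (z : ℚ_[p]) : ℚ_[p] :=
  ∑ k ∈ Finset.range (n + 1),
    poch p (-(n : ℚ_[p])) k * poch p ((n : ℚ_[p]) + 1) k / (Nat.factorial k : ℚ_[p]) ^ 2 * z ^ k

open Polynomial Finset
open scoped Nat

lemma ascPochhammer_eval_eq_prod_range {R : Type*} [CommSemiring R] (k : ℕ) (x : R) :
    (ascPochhammer R k).eval x = ∏ j ∈ range k, (x + j) := by
  induction k with
  | zero => simp
  | succ k ih => rw [ascPochhammer_succ_eval, ih, prod_range_succ]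

section TwoFOneCoeff

variable {K : Type*} [Field K]

/-- The coefficient of `u ^ k` in `₂F₁(a, b; 1; u)`. -/
noncomputable def twoFOneCoeff (a b : K) (k : ℕ) : K :=
  (ascPochhammer K k).eval a * (ascPochhammer K k).eval b / (k ! : K) ^ 2

@[simp]
lemma twoFOneCoeff_zero (a b : K) : twoFOneCoeff a b 0 = 1 := by
  simp [twoFOneCoeff]

lemma twoFOneCoeff_neg_natCast_of_lt (b : K) {n k : ℕ} (h : n < k) :
    twoFOneCoeff (-(n : K)) b k = 0 := by
  simp [twoFOneCoeff, ascPochhammer_eval_neg_coe_nat_of_lt h]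

lemma succ_sq_mul_twoFOneCoeff_succ [CharZero K] (a b : K) (k : ℕ) :
    ((k : K) + 1) ^ 2 * twoFOneCoeff a b (k + 1) = (a + k) * (b + k) * twoFOneCoeff a b k := by
  have hk : (k ! : K) ≠ 0 := Nat.cast_ne_zero.2 k.factorial_ne_zero
  simp only [twoFOneCoeff, ascPochhammer_succ_eval, Nat.factorial_succ, Nat.cast_mul,
    Nat.cast_succ]
  field_simp

end TwoFOneCoeff

namespace Polynomial

section LegendreOp

variable {R : Type*} [CommRing R]

/-- The Legendre operator `(1 - x²) d²/dx² - 2x d/dx` in the variable `z = (1 - x) / 2`,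
in Sturm–Liouville form. -/
noncomputable def legendreOp : R[X] →ₗ[R] R[X] :=
  derivative ∘ₗ LinearMap.mulLeft R (X - X ^ 2) ∘ₗ derivative

lemma legendreOp_apply (Y : R[X]) :
    legendreOp Y = derivative ((X - X ^ 2) * derivative Y) := rfl

lemma coeff_legendreOp (Y : R[X]) (m : ℕ) :
    (legendreOp Y).coeff m = ((m : R) + 1) ^ 2 * Y.coeff (m + 1) - m * (m + 1) * Y.coeff m := by
  rw [legendreOp_apply, coeff_derivative, sub_mul, coeff_sub, X_mul, coeff_mul_X, pow_two,
    mul_assoc, X_mul, coeff_mul_X, coeff_derivative]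
  rcases m with _ | m
  · simp
  · simp only [X_mul, coeff_mul_X, coeff_derivative]
    push_cast
    ring

lemma legendreOp_pow (k : ℕ) :
    legendreOp ((4 * X * (1 - X) : R[X]) ^ k) =
      (4 * k ^ 2 : R) • (4 * X * (1 - X)) ^ (k - 1)
        - (2 * k * (2 * k + 1) : R) • (4 * X * (1 - X)) ^ k := by
  rcases k with _ | j
  · simp [legendreOp_apply]
  · obtain ⟨u, hu⟩ : ∃ u : R[X], 4 * X * (1 - X) = u := ⟨_, rfl⟩
    have hdu : derivative u = 4 - 8 * X := by
      rw [← hu]; simp [derivative_mul]; ring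
    rw [hu, legendreOp_apply, derivative_pow_succ, hdu]
    have h : (X - X ^ 2) * (C ((j : R) + 1) * u ^ j * (4 - 8 * X))
        = C ((j : R) + 1) * u ^ (j + 1) * (1 - 2 * X) := by
      rw [← hu]; ring
    simp only [h, derivative_mul, derivative_C, derivative_pow_succ, hdu, derivative_sub,
      derivative_one, derivative_X, derivative_ofNat, smul_eq_C_mul, Nat.add_sub_cancel]
    push_cast
    simp only [map_add, map_mul, map_pow, map_natCast, map_ofNat, map_one]
    linear_combination (-4 * ((j : R[X]) + 1) ^ 2 * u ^ j) * hu

end LegendreOp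

section QuadraticTransformation

variable {K : Type*} [Field K]

lemma coeff_eq_of_legendreOp_eq_smul [CharZero K] {Y : K[X]} {n : ℕ}
    (hY : legendreOp Y = -((n : K) * (n + 1)) • Y) (m : ℕ) :
    Y.coeff m = Y.coeff 0 * twoFOneCoeff (-(n : K)) (n + 1) m := by
  induction m with
  | zero => simp
  | succ m ih =>
    have hm : ((m : K) + 1) ^ 2 ≠ 0 := pow_ne_zero 2 (Nat.cast_add_one_ne_zero m)
    have hrec := congrArg (coeff · m) hY
    simp only [coeff_legendreOp, coeff_smul, smul_eq_mul, ih] at hrec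
    apply mul_left_cancel₀ hm
    rw [mul_left_comm, succ_sq_mul_twoFOneCoeff_succ]
    linear_combination hrec

/-- `P_{2r}(1 - 2X)`, in the form given by the quadratic transformation. -/
noncomputable def legendreQuadratic (r : ℕ) : K[X] :=
  ∑ k ∈ range (r + 1), twoFOneCoeff (-(r : K)) (r + 1 / 2) k • (4 * X * (1 - X)) ^ k

lemma legendreOp_legendreQuadratic [CharZero K] (r : ℕ) :
    legendreOp (legendreQuadratic r : K[X]) =
      -(((2 * r : ℕ) : K) * ((2 * r : ℕ) + 1)) • legendreQuadratic r := by
  set e := twoFOneCoeff (-(r : K)) (r + 1 / 2)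
  have he (k : ℕ) : 4 * ((k : K) + 1) ^ 2 * e (k + 1)
      = (2 * k * (2 * k + 1) - ((2 * r : ℕ) : K) * ((2 * r : ℕ) + 1)) * e k := by
    rw [mul_assoc, succ_sq_mul_twoFOneCoeff_succ]; push_cast; ring
  have hterm (k : ℕ) : e k • legendreOp ((4 * X * (1 - X) : K[X]) ^ k)
        + (((2 * r : ℕ) : K) * ((2 * r : ℕ) + 1)) • e k • (4 * X * (1 - X)) ^ k
      = (4 * (k : K) ^ 2 * e k) • (4 * X * (1 - X)) ^ (k - 1)
        - (4 * ((k + 1 : ℕ) : K) ^ 2 * e (k + 1)) • (4 * X * (1 - X)) ^ (k + 1 - 1) := by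
    rw [legendreOp_pow, Nat.add_sub_cancel]
    push_cast
    rw [he]
    module
  rw [legendreQuadratic, map_sum, neg_smul, eq_neg_iff_add_eq_zero, smul_sum, ← sum_add_distrib]
  simp only [map_smul]
  have htop : e (r + 1) = 0 := twoFOneCoeff_neg_natCast_of_lt _ r.lt_succ_self
  rw [sum_congr rfl fun k _ => hterm k, sum_range_sub']
  simp [htop]

lemma coeff_zero_legendreQuadratic (r : ℕ) : (legendreQuadratic r : K[X]).coeff 0 = 1 := by
  rw [coeff_zero_eq_eval_zero, legendreQuadratic, eval_finsetSum, sum_range_succ']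
  simp

lemma natDegree_legendreQuadratic_le (r : ℕ) :
    (legendreQuadratic r : K[X]).natDegree ≤ 2 * r := by
  refine natDegree_sum_le_of_forall_le _ _ fun k hk => (natDegree_smul_le _ _).trans ?_
  have hu : (4 * X * (1 - X) : K[X]).natDegree ≤ 2 := by compute_degree
  have := mem_range.1 hk
  calc _ ≤ k * 2 := natDegree_pow_le_of_le k hu
    _ ≤ 2 * r := by omega

theorem sum_twoFOneCoeff_legendre_eq [CharZero K] (r : ℕ) (z : K) :
    ∑ m ∈ range (2 * r + 1), twoFOneCoeff (-((2 * r : ℕ) : K)) ((2 * r : ℕ) + 1) m * z ^ m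
      = ∑ k ∈ range (r + 1), twoFOneCoeff (-(r : K)) (r + 1 / 2) k * (4 * z * (1 - z)) ^ k := by
  have hcoeff := coeff_eq_of_legendreOp_eq_smul (legendreOp_legendreQuadratic (K := K) r)
  rw [coeff_zero_legendreQuadratic] at hcoeff
  have := eval_eq_sum_range' (Nat.lt_succ_of_le (natDegree_legendreQuadratic_le (K := K) r)) z
  simp only [hcoeff, one_mul] at this
  rw [← this, legendreQuadratic, eval_finsetSum]
  simp

end QuadraticTransformation

end Polynomial

section Ultrametric

variable {K : Type*} [NormedField K] [IsUltrametricDist K]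

lemma IsUltrametricDist.norm_prod_sub_prod_le {ι : Type*} {s : Finset ι} {f g : ι → K} {ε : ℝ}
    (hε : 0 ≤ ε) (hf : ∀ i ∈ s, ‖f i‖ ≤ 1) (hg : ∀ i ∈ s, ‖g i‖ ≤ 1)
    (hfg : ∀ i ∈ s, ‖f i - g i‖ ≤ ε) :
    ‖∏ i ∈ s, f i - ∏ i ∈ s, g i‖ ≤ ε := by
  induction s using Finset.cons_induction with
  | empty => simpa using hε
  | cons a s ha ih =>
    simp only [mem_cons, forall_eq_or_imp] at hf hg hfg
    have hprod : ‖∏ i ∈ s, f i‖ ≤ 1 := by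
      rw [norm_prod]
      exact prod_le_one (fun i _ => norm_nonneg _) hf.2
    rw [prod_cons, prod_cons,
      show f a * ∏ i ∈ s, f i - g a * ∏ i ∈ s, g i
        = (f a - g a) * ∏ i ∈ s, f i + g a * (∏ i ∈ s, f i - ∏ i ∈ s, g i) by ring]
    refine (IsUltrametricDist.norm_add_le_max _ _).trans (max_le ?_ ?_) <;> rw [norm_mul]
    · exact (mul_le_mul hfg.1 hprod (norm_nonneg _) hε).trans_eq (mul_one ε)
    · exact mul_le_of_le_one_left (norm_nonneg _) hg.1 |>.trans (ih hf.2 hg.2 hfg.2)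

lemma norm_ascPochhammer_eval_sub_mul_eval_add_sub_sq_le {a w : K} (ha : ‖a‖ ≤ 1) (hw : ‖w‖ ≤ 1)
    (k : ℕ) :
    ‖(ascPochhammer K k).eval (a - w) * (ascPochhammer K k).eval (a + w)
      - (ascPochhammer K k).eval a ^ 2‖ ≤ ‖w‖ ^ 2 := by
  have hfactor (j : ℕ) : ‖a + j‖ ≤ 1 :=
    (IsUltrametricDist.norm_add_le_max _ _).trans
      (max_le ha (IsUltrametricDist.norm_natCast_le_one K j))
  simp only [ascPochhammer_eval_eq_prod_range]
  rw [← prod_mul_distrib, ← prod_pow]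
  refine IsUltrametricDist.norm_prod_sub_prod_le (by positivity) (fun j _ => ?_) (fun j _ => ?_)
    (fun j _ => ?_)
  · rw [show (a - w + j) * (a + w + j) = (a + j) ^ 2 + -w ^ 2 by ring]
    refine (IsUltrametricDist.norm_add_le_max _ _).trans (max_le ?_ ?_)
    · rw [norm_pow]; exact pow_le_one₀ (norm_nonneg _) (hfactor j)
    · rw [norm_neg, norm_pow]; exact pow_le_one₀ (norm_nonneg _) hw
  · rw [norm_pow]; exact pow_le_one₀ (norm_nonneg _) (hfactor j)
  · rw [show (a - w + j) * (a + w + j) - (a + j) ^ 2 = -w ^ 2 by ring, norm_neg, norm_pow]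

end Ultrametric

section Padic

variable {p : ℕ} [Fact p.Prime]

lemma Padic.norm_four_eq_one (hp : Odd p) : ‖(4 : ℚ_[p])‖ = 1 := by
  have : p.Coprime (2 ^ 2) := (Nat.coprime_two_right.2 hp).pow_right 2
  simpa using Padic.norm_natCast_eq_one_iff.2 this

lemma Padic.norm_factorial_eq_one {k : ℕ} (hk : k < p) : ‖(k ! : ℚ_[p])‖ = 1 := by
  rw [Padic.norm_natCast_eq_one_iff, Nat.Prime.coprime_iff_not_dvd Fact.out,
    Nat.Prime.dvd_factorial Fact.out]
  omega

lemma Padic.norm_natCast_add_quarter_sq_le (hp : Odd p) {r : ℕ} (hr : p ∣ 4 * r + 1) :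
    ‖(r : ℚ_[p]) + 1 / 4‖ ^ 2 ≤ (p : ℝ) ^ (-2 : ℤ) := by
  have h4 := Padic.norm_four_eq_one hp
  have := (Padic.norm_int_le_pow_iff_dvd (p := p) (((4 * r + 1 : ℕ) : ℤ) ^ 2) 2).2
    (pow_dvd_pow_of_dvd (Int.natCast_dvd_natCast.2 hr) 2)
  rw [show ((r : ℚ_[p]) + 1 / 4) = ((4 * r + 1 : ℕ) : ℚ_[p]) / 4 by push_cast; ring, norm_div, h4,
    div_one, ← norm_pow]
  push_cast at this ⊢
  exact this

lemma Padic.norm_twoFOneCoeff_quarter_sub_le (hp : Odd p) {r : ℕ} (hr : p ∣ 4 * r + 1)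
    {k : ℕ} (hk : k < p) :
    ‖twoFOneCoeff (1 / 4 : ℚ_[p]) (1 / 4) k - twoFOneCoeff (-(r : ℚ_[p])) (r + 1 / 2) k‖
      ≤ (p : ℝ) ^ (-2 : ℤ) := by
  set w : ℚ_[p] := r + 1 / 4
  have hquarter : ‖(1 / 4 : ℚ_[p])‖ ≤ 1 := by
    rw [norm_div, norm_one, Padic.norm_four_eq_one hp, div_one]
  have hw : ‖w‖ ≤ 1 :=
    (IsUltrametricDist.norm_add_le_max _ _).trans
      (max_le (IsUltrametricDist.norm_natCast_le_one _ r) hquarter)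
  have hsub : -(r : ℚ_[p]) = 1 / 4 - w := by ring
  have hadd : (r : ℚ_[p]) + 1 / 2 = 1 / 4 + w := by ring
  rw [twoFOneCoeff, twoFOneCoeff, hsub, hadd, div_sub_div_same, norm_div, norm_pow,
    Padic.norm_factorial_eq_one hk, one_pow, div_one, norm_sub_rev, ← sq]
  exact (norm_ascPochhammer_eval_sub_mul_eval_add_sub_sq_le hquarter hw k).trans
    (Padic.norm_natCast_add_quarter_sq_le hp hr)

lemma Padic.norm_sum_quarter_sub_legendreL_le (hp : Odd p) {r : ℕ} (hrp : r < p)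
    (hr : p ∣ 4 * r + 1) (z : ℤ_[p]) :
    ‖(∑ k ∈ range p, poch p ((1 : ℚ_[p]) / 4) k ^ 2 / (k ! : ℚ_[p]) ^ 2
          * (4 * (z : ℚ_[p]) * (1 - (z : ℚ_[p]))) ^ k)
      - legendreL p (2 * r) (z : ℚ_[p])‖ ≤ (p : ℝ) ^ (-2 : ℤ) := by
  set x : ℚ_[p] := 4 * z * (1 - z)
  have hx : ‖x‖ ≤ 1 := by
    rw [show x = ((4 * z * (1 - z) : ℤ_[p]) : ℚ_[p]) by push_cast; rfl,
      PadicInt.padic_norm_e_of_padicInt]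
    exact PadicInt.norm_le_one _
  have hL : legendreL p (2 * r) z
      = ∑ k ∈ range p, twoFOneCoeff (-(r : ℚ_[p])) (r + 1 / 2) k * x ^ k := by
    refine (sum_twoFOneCoeff_legendre_eq r (z : ℚ_[p])).trans <|
      sum_subset (range_subset_range.2 (by omega)) fun k _ hk => ?_
    rw [twoFOneCoeff_neg_natCast_of_lt _ (by simpa using hk), zero_mul]
  have hS : ∑ k ∈ range p, poch p ((1 : ℚ_[p]) / 4) k ^ 2 / (k ! : ℚ_[p]) ^ 2 * x ^ k
      = ∑ k ∈ range p, twoFOneCoeff (1 / 4 : ℚ_[p]) (1 / 4) k * x ^ k := by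
    simp only [twoFOneCoeff, poch, sq]
  rw [hS, hL, ← sum_sub_distrib]
  refine IsUltrametricDist.norm_sum_le_of_forall_le_of_nonneg (by positivity) fun k hk => ?_
  rw [← sub_mul, norm_mul, norm_pow]
  exact (mul_le_of_le_one_right (norm_nonneg _) (pow_le_one₀ (norm_nonneg _) hx)).trans
    (Padic.norm_twoFOneCoeff_quarter_sub_le hp hr (mem_range.1 hk))

end Padic

/-- The truncated `₂F₁[1/4,1/4;1|4z(1−z)]` is congruent mod `p²` to a Legendre polynomial. -/
theorem padic_2F1_quarter_legendre
    (p : ℕ) [Fact p.Prime] (hp : Odd p) (z : ℤ_[p]) :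
    (p % 4 = 1 →
      ‖(∑ k ∈ Finset.range p,
          poch p ((1 : ℚ_[p]) / 4) k ^ 2 / (Nat.factorial k : ℚ_[p]) ^ 2
            * (4 * (z : ℚ_[p]) * (1 - (z : ℚ_[p]))) ^ k)
        - legendreL p ((p - 1) / 2) (z : ℚ_[p])‖ ≤ (p : ℝ) ^ (-2 : ℤ)) ∧
    (p % 4 = 3 →
      ‖(∑ k ∈ Finset.range p,
          poch p ((1 : ℚ_[p]) / 4) k ^ 2 / (Nat.factorial k : ℚ_[p]) ^ 2
            * (4 * (z : ℚ_[p]) * (1 - (z : ℚ_[p]))) ^ k)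
        - legendreL p ((3 * p - 1) / 2) (z : ℚ_[p])‖ ≤ (p : ℝ) ^ (-2 : ℤ)) := by
  refine ⟨fun h1 => ?_, fun h3 => ?_⟩
  · rw [show (p - 1) / 2 = 2 * (p / 4) by omega]
    exact Padic.norm_sum_quarter_sub_legendreL_le hp (by omega) ⟨1, by omega⟩ z
  · rw [show (3 * p - 1) / 2 = 2 * (3 * p / 4) by omega]
    exact Padic.norm_sum_quarter_sub_legendreL_le hp (by omega) ⟨3, by omega⟩ z
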